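/- Let p ∈ ℝ³ be a permutation of (0, β, π−β) with 0 < β < π (a mildly degenerate boundary point of Δ₀), and let q ∈ Δ₀. Then the function t ↦ V₀((1−t)·p + t·q) is differentiable on (0,1) and its derivative tends to +∞ as t → 0⁺. -/

import Mathlib

open Real Filter

/-- Milnor's Lobachevsky function `Л(x) = -∫₀ˣ log |2 sin t| dt`. -/
noncomputable def lob (x : ℝ) : ℝ := -∫ t in (0:ℝ)..x, Real.log |2 * Real.sin t|

/-- `V₀(γ₁,γ₂,γ₃) = Л(γ₁) + Л(γ₂) + Л(γ₃)`. -/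
noncomputable def V0 (γ : Fin 3 → ℝ) : ℝ := lob (γ 0) + lob (γ 1) + lob (γ 2)

/-- The set Δ₀ of angle triples of ideal tetrahedra. -/
def D0 : Set (Fin 3 → ℝ) :=
  {γ | (∀ i, 0 < γ i) ∧ γ 0 + γ 1 + γ 2 = π}

section Aux

open MeasureTheory Set

lemma negLog_II_01 : IntervalIntegrable (fun t : ℝ => -Real.log t) volume 0 1 := by
  apply intervalIntegral.intervalIntegrable_deriv_of_nonneg
    (g := fun t : ℝ => t + Real.negMulLog t)
  · exact (continuous_id.add Real.continuous_negMulLog).continuousOn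
  · intro x hx
    rw [min_def, max_def] at hx
    norm_num at hx
    have h1 : HasDerivAt (fun t : ℝ => t * Real.log t) (Real.log x + 1) x := by
      have := (hasDerivAt_id x).mul (Real.hasDerivAt_log (ne_of_gt hx.1))
      refine this.congr_deriv ?_
      simp [mul_inv_cancel₀ hx.1.ne']
    have : HasDerivAt (fun t : ℝ => t - t * Real.log t) (-Real.log x) x := by
      have := (hasDerivAt_id x).sub h1
      refine this.congr_deriv ?_
      ring
    apply this.congr_of_eventuallyEq
    filter_upwards with t
    simp only [Real.negMulLog_eq_neg]
    ring
  · intro x hx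
    rw [min_def, max_def] at hx
    norm_num at hx
    have := Real.log_nonpos (le_of_lt hx.1) (le_of_lt hx.2)
    linarith

lemma negLog_II (b : ℝ) (hb : 0 < b) :
    IntervalIntegrable (fun t : ℝ => -Real.log t) volume 0 b := by
  rcases le_or_gt b 1 with h | h
  · apply negLog_II_01.mono_set
    rw [Set.uIcc_of_le hb.le, Set.uIcc_of_le zero_le_one]
    exact Set.Icc_subset_Icc le_rfl h
  · exact negLog_II_01.trans
      ((intervalIntegral.intervalIntegrable_log (μ := volume) (Set.notMem_uIcc_of_lt one_pos hb)).neg)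

lemma absLog_II (b : ℝ) (hb : 0 < b) :
    IntervalIntegrable (fun t : ℝ => |Real.log t|) volume 0 b := by
  apply (negLog_II b hb).mono_fun
  · exact (Real.measurable_log.abs).aestronglyMeasurable
  · filter_upwards with t
    simp [abs_abs]

lemma logSin_II (y : ℝ) (hy : 0 < y) (hyπ : y < π) :
    IntervalIntegrable (fun t : ℝ => Real.log |2 * Real.sin t|) volume 0 y := by
  set c : ℝ := Real.sin y / y with hc
  have hc0 : 0 < c := div_pos (Real.sin_pos_of_pos_of_lt_pi hy hyπ) hy
  set C : ℝ := |Real.log (2 * c)| + |Real.log 2| with hC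
  have hg : IntervalIntegrable (fun t : ℝ => C + |Real.log t|) volume 0 y :=
    (_root_.intervalIntegrable_const).add (absLog_II y hy)
  apply hg.mono_fun
  · exact (Real.measurable_log.comp
      ((measurable_const.mul Real.measurable_sin).abs)).aestronglyMeasurable
  · rw [Filter.EventuallyLE, ae_restrict_iff' measurableSet_uIoc]
    filter_upwards with t ht
    rw [Set.uIoc_of_le hy.le] at ht
    obtain ⟨ht0, hty⟩ := ht
    have hsinpos : 0 < Real.sin t :=
      Real.sin_pos_of_pos_of_lt_pi ht0 (lt_of_le_of_lt hty hyπ)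
    -- lower bound via concavity: sin t ≥ (t/y) * sin y
    have hlow : (t / y) * Real.sin y ≤ Real.sin t := by
      have hty1 : t / y ≤ 1 := (div_le_one hy).2 hty
      have hconc := _root_.strictConcaveOn_sin_Icc.concaveOn.2
        (Set.mem_Icc.2 ⟨le_rfl, Real.pi_pos.le⟩)
        (Set.mem_Icc.2 ⟨hy.le, hyπ.le⟩)
        (show (0:ℝ) ≤ 1 - t / y by linarith)
        (show (0:ℝ) ≤ t / y by positivity)
        (show (1 - t / y) + t / y = 1 by ring)
      have hxy : (1 - t / y) • (0:ℝ) + (t / y) • y = t := by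
        simp only [smul_eq_mul]
        field_simp
        ring
      rw [hxy] at hconc
      simpa [Real.sin_zero] using hconc
    have hup : Real.sin t ≤ t := (Real.sin_lt ht0).le
    have hct : (t / y) * Real.sin y = c * t := by rw [hc]; ring
    have h2ct : 0 < 2 * (c * t) := by positivity
    have hb1 : Real.log (2 * (c * t)) ≤ Real.log |2 * Real.sin t| := by
      rw [abs_of_pos (by positivity)]
      apply Real.log_le_log h2ct
      nlinarith [hlow, hct]
    have hb2 : Real.log |2 * Real.sin t| ≤ Real.log (2 * t) := by
      rw [abs_of_pos (by positivity)]
      apply Real.log_le_log (by positivity)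
      linarith
    have habs := abs_le_max_abs_abs hb1 hb2
    have e1 : Real.log (2 * (c * t)) = Real.log (2 * c) + Real.log t := by
      rw [show (2 : ℝ) * (c * t) = (2 * c) * t by ring,
        Real.log_mul (by positivity) (ne_of_gt ht0)]
    have e2 : Real.log (2 * t) = Real.log 2 + Real.log t := by
      rw [Real.log_mul two_ne_zero (ne_of_gt ht0)]
    have hA : |Real.log (2 * (c * t))| ≤ C + |Real.log t| := by
      rw [e1, hC]
      have := abs_add_le (Real.log (2 * c)) (Real.log t)
      have := abs_nonneg (Real.log 2)
      linarith
    have hB : |Real.log (2 * t)| ≤ C + |Real.log t| := by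
      rw [e2, hC]
      have := abs_add_le (Real.log 2) (Real.log t)
      have := abs_nonneg (Real.log (2 * c))
      linarith
    have hbound := le_trans habs (max_le hA hB)
    exact le_trans hbound (le_abs_self _)

lemma lob_hasDerivAt {x : ℝ} (h0 : 0 < x) (hπ : x < π) :
    HasDerivAt lob (-Real.log (2 * Real.sin x)) x := by
  have hsin : 0 < Real.sin x := Real.sin_pos_of_pos_of_lt_pi h0 hπ
  have hint := logSin_II x h0 hπ
  have hmeas : StronglyMeasurableAtFilter
      (fun t : ℝ => Real.log |2 * Real.sin t|) (nhds x) volume :=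
    ⟨Set.univ, Filter.univ_mem, ((Real.measurable_log.comp
      ((measurable_const.mul Real.measurable_sin).abs)).aestronglyMeasurable).restrict⟩
  have hcont : ContinuousAt (fun t : ℝ => Real.log |2 * Real.sin t|) x := by
    apply (Real.continuousAt_log ?_).comp
      ((continuous_abs.comp (continuous_const.mul Real.continuous_sin)).continuousAt)
    simp only [Function.comp]
    exact abs_ne_zero.2 (mul_ne_zero two_ne_zero hsin.ne')
  have h := (intervalIntegral.integral_hasDerivAt_right hint hmeas hcont).neg
  have hval : Real.log |2 * Real.sin x| = Real.log (2 * Real.sin x) := by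
    rw [abs_of_pos (by positivity)]
  rw [hval] at h
  exact h

end Aux

theorem V0_mildly_degenerate_boundary_derivative (p : Fin 3 → ℝ)
    (hp : ∃ β : ℝ, 0 < β ∧ β < π ∧ ([p 0, p 1, p 2] : List ℝ).Perm [0, β, π - β])
    (q : Fin 3 → ℝ) (hq : q ∈ D0) :
    (∀ t ∈ Set.Ioo (0:ℝ) 1,
      DifferentiableAt ℝ (fun t : ℝ => V0 ((1 - t) • p + t • q)) t) ∧
    Tendsto (deriv (fun t : ℝ => V0 ((1 - t) • p + t • q)))
      (nhdsWithin 0 (Set.Ioi 0)) atTop := by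
  obtain ⟨β, hβ0, hβπ, hperm⟩ := hp
  obtain ⟨hqpos, hqsum⟩ := hq
  have hpmem : ∀ i : Fin 3, p i = 0 ∨ p i = β ∨ p i = π - β := by
    intro i
    have hmem : p i ∈ [p 0, p 1, p 2] := by fin_cases i <;> simp
    simpa using hperm.subset hmem
  have hp0 : ∀ i, 0 ≤ p i := by
    intro i; rcases hpmem i with h | h | h <;> rw [h] <;> linarith
  have hpπ : ∀ i, p i < π := by
    intro i; rcases hpmem i with h | h | h <;> rw [h] <;> linarith
  have hppos : ∀ i, p i = 0 ∨ 0 < p i := by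
    intro i; rcases hpmem i with h | h | h
    · exact Or.inl h
    · exact Or.inr (by rw [h]; linarith)
    · exact Or.inr (by rw [h]; linarith)
  have hzero : ∃ i : Fin 3, p i = 0 := by
    have h0 : (0:ℝ) ∈ [p 0, p 1, p 2] := hperm.symm.subset (by simp)
    simp only [List.mem_cons, List.mem_singleton, List.not_mem_nil, or_false] at h0
    rcases h0 with h | h | h
    exacts [⟨0, h.symm⟩, ⟨1, h.symm⟩, ⟨2, h.symm⟩]
  have hqπ : ∀ i, q i < π := by
    intro i
    have h0 := hqpos 0; have h1 := hqpos 1; have h2 := hqpos 2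
    fin_cases i
    · change q 0 < π; linarith
    · change q 1 < π; linarith
    · change q 2 < π; linarith
  have hcoord : ∀ (t : ℝ) (i : Fin 3),
      ((1 - t) • p + t • q) i = (1 - t) * p i + t * q i := by
    intro t i; simp [smul_eq_mul]
  have hxmem : ∀ t ∈ Set.Ioo (0:ℝ) 1, ∀ i : Fin 3,
      0 < (1 - t) * p i + t * q i ∧ (1 - t) * p i + t * q i < π := by
    intro t ht i
    obtain ⟨ht0, ht1⟩ := ht
    constructor
    · have h1 : 0 ≤ (1 - t) * p i := mul_nonneg (by linarith) (hp0 i)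
      have h2 : 0 < t * q i := mul_pos ht0 (hqpos i)
      linarith
    · nlinarith [mul_lt_mul_of_pos_left (hpπ i) (show (0:ℝ) < 1 - t by linarith),
        mul_lt_mul_of_pos_left (hqπ i) ht0]
  have hterm : ∀ t ∈ Set.Ioo (0:ℝ) 1, ∀ i : Fin 3,
      HasDerivAt (fun s : ℝ => lob ((1 - s) * p i + s * q i))
        (-Real.log (2 * Real.sin ((1 - t) * p i + t * q i)) * (q i - p i)) t := by
    intro t ht i
    have hin : HasDerivAt (fun s : ℝ => (1 - s) * p i + s * q i) (q i - p i) t := by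
      have h1 := (((hasDerivAt_id t).const_sub 1).mul_const (p i)).add
        ((hasDerivAt_id t).mul_const (q i))
      refine h1.congr_deriv ?_
      ring
    exact HasDerivAt.comp (h₂ := lob) t (lob_hasDerivAt (hxmem t ht i).1 (hxmem t ht i).2) hin
  have hD : ∀ t ∈ Set.Ioo (0:ℝ) 1,
      HasDerivAt (fun s : ℝ => V0 ((1 - s) • p + s • q))
        (-Real.log (2 * Real.sin ((1 - t) * p 0 + t * q 0)) * (q 0 - p 0)
          + -Real.log (2 * Real.sin ((1 - t) * p 1 + t * q 1)) * (q 1 - p 1)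
          + -Real.log (2 * Real.sin ((1 - t) * p 2 + t * q 2)) * (q 2 - p 2)) t := by
    intro t ht
    have h := ((hterm t ht 0).add (hterm t ht 1)).add (hterm t ht 2)
    refine h.congr_of_eventuallyEq ?_
    filter_upwards with s
    simp [V0, hcoord]
  refine ⟨fun t ht => (hD t ht).differentiableAt, ?_⟩
  have hmemIoo : Set.Ioo (0:ℝ) 1 ∈ nhdsWithin (0:ℝ) (Set.Ioi 0) :=
    Ioo_mem_nhdsGT_of_mem (by norm_num)
  have hderiveq : deriv (fun t : ℝ => V0 ((1 - t) • p + t • q))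
      =ᶠ[nhdsWithin (0:ℝ) (Set.Ioi 0)]
      fun t => -Real.log (2 * Real.sin ((1 - t) * p 0 + t * q 0)) * (q 0 - p 0)
        + -Real.log (2 * Real.sin ((1 - t) * p 1 + t * q 1)) * (q 1 - p 1)
        + -Real.log (2 * Real.sin ((1 - t) * p 2 + t * q 2)) * (q 2 - p 2) := by
    filter_upwards [hmemIoo] with t ht
    exact (hD t ht).deriv
  refine Tendsto.congr' hderiveq.symm ?_
  -- per-index behaviour
  have htop : ∀ i : Fin 3, p i = 0 →
      Tendsto (fun t : ℝ =>
          -Real.log (2 * Real.sin ((1 - t) * p i + t * q i)) * (q i - p i))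
        (nhdsWithin 0 (Set.Ioi 0)) atTop := by
    intro i hi
    simp only [hi, mul_zero, zero_add, sub_zero]
    apply Tendsto.atTop_mul_const (hqpos i)
    have h1 : Tendsto (fun t : ℝ => 2 * Real.sin (t * q i))
        (nhdsWithin 0 (Set.Ioi 0)) (nhdsWithin 0 (Set.Ioi 0)) := by
      rw [tendsto_nhdsWithin_iff]
      constructor
      · have hcont : Continuous (fun t : ℝ => 2 * Real.sin (t * q i)) := by fun_prop
        have hc : Tendsto (fun t : ℝ => 2 * Real.sin (t * q i)) (nhds 0) (nhds 0) := by
          have := hcont.tendsto 0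
          simpa using this
        exact hc.mono_left nhdsWithin_le_nhds
      · have hmem2 : Set.Ioo (0:ℝ) (π / q i) ∈ nhdsWithin (0:ℝ) (Set.Ioi 0) :=
          Ioo_mem_nhdsGT_of_mem ⟨le_rfl, div_pos Real.pi_pos (hqpos i)⟩
        filter_upwards [hmem2] with t ht
        have h3 : 0 < t * q i := mul_pos ht.1 (hqpos i)
        have h4 : t * q i < π := (lt_div_iff₀ (hqpos i)).1 ht.2
        have := Real.sin_pos_of_pos_of_lt_pi h3 h4
        simp only [Set.mem_Ioi]
        positivity
    have h2 := Real.tendsto_log_nhdsGT_zero.comp h1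
    exact tendsto_neg_atBot_atTop.comp h2
  have hfin : ∀ i : Fin 3, 0 < p i → ∃ L,
      Tendsto (fun t : ℝ =>
          -Real.log (2 * Real.sin ((1 - t) * p i + t * q i)) * (q i - p i))
        (nhdsWithin 0 (Set.Ioi 0)) (nhds L) := by
    intro i hi
    have hval : (1 - (0:ℝ)) * p i + 0 * q i = p i := by ring
    have hne : 2 * Real.sin ((1 - (0:ℝ)) * p i + 0 * q i) ≠ 0 := by
      rw [hval]
      have := Real.sin_pos_of_pos_of_lt_pi hi (hpπ i)
      positivity
    have hc : ContinuousAt (fun t : ℝ =>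
        -Real.log (2 * Real.sin ((1 - t) * p i + t * q i)) * (q i - p i)) 0 := by
      have hin : Continuous (fun t : ℝ => 2 * Real.sin ((1 - t) * p i + t * q i)) := by
        fun_prop
      have h5 : ContinuousAt
          (fun t : ℝ => Real.log (2 * Real.sin ((1 - t) * p i + t * q i))) 0 :=
        hin.continuousAt.log hne
      exact (h5.neg).mul continuousAt_const
    exact ⟨_, hc.tendsto.mono_left nhdsWithin_le_nhds⟩
  have hlb : ∀ i : Fin 3, ∃ c : ℝ, ∀ᶠ t in nhdsWithin (0:ℝ) (Set.Ioi 0),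
      c ≤ -Real.log (2 * Real.sin ((1 - t) * p i + t * q i)) * (q i - p i) := by
    intro i
    rcases hppos i with h | h
    · exact ⟨0, (htop i h).eventually_ge_atTop 0⟩
    · obtain ⟨L, hL⟩ := hfin i h
      exact ⟨L - 1, hL.eventually (eventually_ge_nhds (by linarith))⟩
  obtain ⟨i0, hi0⟩ := hzero
  obtain ⟨c0, hc0⟩ := hlb 0
  obtain ⟨c1, hc1⟩ := hlb 1
  obtain ⟨c2, hc2⟩ := hlb 2
  fin_cases i0
  · exact tendsto_atTop_add_right_of_le' _ c2
      (tendsto_atTop_add_right_of_le' _ c1 (htop 0 hi0) hc1) hc2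
  · exact tendsto_atTop_add_right_of_le' _ c2
      (tendsto_atTop_add_left_of_le' _ c0 hc0 (htop 1 hi0)) hc2
  · refine tendsto_atTop_add_left_of_le' _ (c0 + c1) ?_ (htop 2 hi0)
    filter_upwards [hc0, hc1] with t h0 h1
    linarith
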